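/- Let μ > 1. Then for every real t with |t| < 1, ∑_{k=0}^∞ Γ(μ+k) · (t^k/k!) · ∑_{n=1}^∞ 2 n^k / ((1−t) + n)^{μ+k} = [2 Γ(μ) / (1−t)^μ] · (ζ(μ) − 1), where ζ(s) = ∑_{n=1}^∞ n^{−s} is the Riemann zeta function (and ζ(μ)−1 = ζ(μ,2) in terms of the Hurwitz zeta function ζ(s,a) = ∑_{m=0}^∞ 1/(m+a)^s). -/

import Mathlib

/-!
For fixed `n`, the sum over `k` is a binomial series:
`∑ₖ Γ(μ+k)/k! · (tn)ᵏ/(1-t+n)^{μ+k} = Γ(μ)/(1-t+n-tn)^μ = Γ(μ)/((1-t)(n+1))^μ`,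
so summing over `n ≥ 1` leaves `Γ(μ)/(1-t)^μ · ∑_{n≥2} n^{-μ}`. The two sums may be interchanged
because the terms at `t` are dominated by the nonnegative terms at `|t|`, whose double sum is finite
by the same computation.
-/

open Polynomial Nat

namespace Real

theorem Gamma_add_nat_eq_mul_ascPochhammer_eval {s : ℝ} (hs : ∀ m : ℕ, s ≠ -m) (n : ℕ) :
    Gamma (s + n) = Gamma s * (ascPochhammer ℝ n).eval s := by
  induction n with
  | zero => simp
  | succ n ih =>
    have hsn : s + n ≠ 0 := fun h => hs n (by linarith)
    rw [Nat.cast_succ, ← add_assoc, Gamma_add_one hsn, ih, ascPochhammer_succ_right]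
    simp only [eval_mul, eval_add, eval_X, eval_natCast]
    ring

theorem hasSum_Gamma_add_nat_div_factorial_mul_pow {μ : ℝ} (hμ : ∀ m : ℕ, μ ≠ -m) {x : ℝ}
    (hx : |x| < 1) :
    HasSum (fun k : ℕ => Gamma (μ + k) / k ! * x ^ k) (Gamma μ / (1 - x) ^ μ) := by
  have hx' : x ∈ Metric.eball (0 : ℝ) 1 := by simpa [Metric.mem_eball, edist_dist] using hx
  have h := ((one_div_one_sub_rpow_hasFPowerSeriesOnBall_zero μ).hasSum hx').mul_left (Gamma μ)
  simp only [FormalMultilinearSeries.ofScalars_apply_eq, zero_add, smul_eq_mul] at h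
  rw [div_eq_mul_one_div]
  refine h.congr_fun fun k => ?_
  have hm : (k ! : ℝ) * Ring.multichoose μ k = (ascPochhammer ℝ k).eval μ := by
    rw [← nsmul_eq_mul, Ring.factorial_nsmul_multichoose_eq_ascPochhammer,
      ascPochhammer_smeval_eq_eval]
  rw [← Ring.multichoose_eq, Gamma_add_nat_eq_mul_ascPochhammer_eval hμ, ← hm]
  field_simp

theorem hasSum_Gamma_add_nat_div_factorial_mul_pow_div_rpow {μ : ℝ} (hμ : ∀ m : ℕ, μ ≠ -m)
    {c y : ℝ} (hc : 0 < c) (hy : |y| < c) :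
    HasSum (fun k : ℕ => Gamma (μ + k) / k ! * y ^ k / c ^ (μ + k))
      (Gamma μ / (c - y) ^ μ) := by
  have hyc : |y / c| < 1 := by rwa [abs_div, abs_of_pos hc, div_lt_one hc]
  have h := (hasSum_Gamma_add_nat_div_factorial_mul_pow hμ hyc).div_const (c ^ μ)
  have hcy : c - y = (1 - y / c) * c := by field_simp
  rw [hcy, mul_rpow (by linarith [le_abs_self (y / c)]) hc.le, ← div_div]
  refine h.congr_fun fun k => ?_
  rw [rpow_add hc, rpow_natCast, div_pow]
  field_simp

end Real

noncomputable def mathieuTerm (μ t a : ℝ) (k : ℕ) : ℝ :=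
  Real.Gamma (μ + k) * (t ^ k / k !) * (2 * a ^ k / ((1 - t) + a) ^ (μ + k))

theorem hasSum_mathieuTerm {μ : ℝ} (hμ : ∀ m : ℕ, μ ≠ -m) {t a : ℝ} (ht : |t| < 1)
    (ha : 0 ≤ a) :
    HasSum (mathieuTerm μ t a) (2 * Real.Gamma μ / (1 - t) ^ μ * (1 / (a + 1) ^ μ)) := by
  have hc : 0 < (1 - t) + a := by linarith [le_abs_self t]
  have hta : |t * a| < (1 - t) + a := by
    rw [abs_mul, abs_of_nonneg ha]
    nlinarith [le_abs_self t]
  have h := (Real.hasSum_Gamma_add_nat_div_factorial_mul_pow_div_rpow hμ hc hta).mul_left 2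
  have ht1 : 0 < 1 - t := by linarith [le_abs_self t]
  have hsub : (1 - t) + a - t * a = (1 - t) * (a + 1) := by ring
  rw [hsub, Real.mul_rpow ht1.le (by linarith)] at h
  rw [show 2 * Real.Gamma μ / (1 - t) ^ μ * (1 / (a + 1) ^ μ)
      = 2 * (Real.Gamma μ / ((1 - t) ^ μ * (a + 1) ^ μ)) by ring]
  refine h.congr_fun fun k => ?_
  rw [mathieuTerm, mul_pow]
  ring

theorem norm_mathieuTerm_le {μ : ℝ} (hμ : 0 < μ) {t a : ℝ} (ht : |t| < 1) (ha : 0 ≤ a) (k : ℕ) :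
    ‖mathieuTerm μ t a k‖ ≤ mathieuTerm μ |t| a k := by
  have hc : 0 < (1 - |t|) + a := by linarith
  have hden : ((1 - |t|) + a) ^ (μ + k) ≤ ((1 - t) + a) ^ (μ + k) :=
    Real.rpow_le_rpow hc.le (by linarith [le_abs_self t]) (by positivity)
  have hΓ := Real.Gamma_pos_of_pos (show 0 < μ + k by positivity)
  rw [mathieuTerm, mathieuTerm, Real.norm_eq_abs, abs_mul, abs_mul, abs_of_pos hΓ, abs_div, abs_div,
    abs_pow, abs_of_nonneg (mul_nonneg zero_le_two (pow_nonneg ha k)), Nat.abs_cast,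
    abs_of_pos (Real.rpow_pos_of_pos (by linarith [le_abs_self t]) _)]
  gcongr

theorem tsum_one_div_nat_add_one_add_one_rpow {μ : ℝ} (hμ : 1 < μ) :
    ∑' n : ℕ, 1 / ((n : ℝ) + 1 + 1) ^ μ = ∑' n : ℕ, 1 / ((n : ℝ) + 1) ^ μ - 1 := by
  have hs : Summable (fun n : ℕ => 1 / ((n : ℝ) + 1) ^ μ) := by
    simpa using (summable_nat_add_iff 1).2 (Real.summable_one_div_nat_rpow.2 hμ)
  rw [hs.tsum_eq_zero_add]
  simp

theorem summable_mathieuTerm {μ : ℝ} (hμ : 1 < μ) {t : ℝ} (ht : |t| < 1) :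
    Summable (fun p : ℕ × ℕ => mathieuTerm μ t ((p.1 : ℝ) + 1) p.2) := by
  have hμ' : ∀ m : ℕ, μ ≠ -m := fun m h => by linarith [m.cast_nonneg (α := ℝ)]
  have htt : |(|t|)| < 1 := by rwa [abs_abs]
  have hrows (n : ℕ) := hasSum_mathieuTerm hμ' htt (n.cast_add_one_pos (α := ℝ)).le
  have hzeta : Summable (fun n : ℕ => 1 / ((n : ℝ) + 1 + 1) ^ μ) := by
    simpa [add_assoc, one_add_one_eq_two] using
      (summable_nat_add_iff 2).2 (Real.summable_one_div_nat_rpow.2 hμ)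
  have hdom : Summable (fun p : ℕ × ℕ => mathieuTerm μ |t| ((p.1 : ℝ) + 1) p.2) := by
    refine (summable_prod_of_nonneg fun p => ?_).2 ⟨fun n => (hrows n).summable, ?_⟩
    · exact (norm_nonneg _).trans (norm_mathieuTerm_le (by linarith) ht (by positivity) _)
    · simpa only [fun n => (hrows n).tsum_eq] using hzeta.mul_left _
  exact hdom.of_norm_bounded fun p => norm_mathieuTerm_le (by linarith) ht (by positivity) _

/-- `∑_k Γ(μ+k)(tᵏ/k!) ∑_{n≥1} 2nᵏ/((1-t)+n)^{μ+k} = 2Γ(μ)/(1-t)^μ · (ζ(μ)-1)`,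
where `ζ(s) = ∑_{n≥1} n^{-s}` is the Riemann zeta function. -/
theorem mathieu_generating_function_at_r_sq_one_sub_t
    (μ : ℝ) (hμ : 1 < μ) (t : ℝ) (ht : |t| < 1) :
    ∑' k : ℕ, Real.Gamma (μ + k) * (t ^ k / k.factorial) *
      ∑' n : ℕ, 2 * ((n : ℝ) + 1) ^ k / ((1 - t) + ((n : ℝ) + 1)) ^ (μ + k)
    = 2 * Real.Gamma μ / (1 - t) ^ μ *
      ((∑' n : ℕ, 1 / ((n : ℝ) + 1) ^ μ) - 1) := by
  have hμ' : ∀ m : ℕ, μ ≠ -m := fun m h => by linarith [m.cast_nonneg (α := ℝ)]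
  calc _ = ∑' k : ℕ, ∑' n : ℕ, mathieuTerm μ t ((n : ℝ) + 1) k := by
        simp only [mathieuTerm, tsum_mul_left]
    _ = ∑' n : ℕ, ∑' k : ℕ, mathieuTerm μ t ((n : ℝ) + 1) k :=
        (summable_mathieuTerm hμ ht).tsum_comm
    _ = ∑' n : ℕ, 2 * Real.Gamma μ / (1 - t) ^ μ * (1 / ((n : ℝ) + 1 + 1) ^ μ) :=
        tsum_congr fun n => (hasSum_mathieuTerm hμ' ht n.cast_add_one_pos.le).tsum_eq
    _ = _ := by rw [tsum_mul_left, tsum_one_div_nat_add_one_add_one_rpow hμ]
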